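/- For every positive integer n, Σ_{k=0}^{n-1} (11k^2+9k+2)·(-1)^{n-1-k}·β_k = Σ_{k=0}^{n-1} C(n,k+1)^2·C(n+k,k)·n·(3n-k-1), where β_k = Σ_{j=0}^{k} C(k,j)^2·C(k+j,j). -/

import Mathlib

/-!
Both sides equal `n² (β_n - β_{n-1})`. On the right this holds summand by summand: with
`F(n, k) = C(n, k)² C(n + k, k)`, the `k`-th summand is `n² (F(n, k + 1) - F(n - 1, k + 1))`.
On the left it follows by induction on `n` from Apéry's recurrence
`(n + 2)² β_{n+2} = (11n² + 33n + 25) β_{n+1} + (n + 1)² β_n`, which is proved by creative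
telescoping: applied to `F(·, k)`, the recurrence operator gives `G(k + 1) - G(k)` for an
explicit certificate `G` vanishing at both ends of the sum.
-/

def apheryBeta (k : ℕ) : ℕ := ∑ j ∈ Finset.range (k + 1), (Nat.choose k j) ^ 2 * Nat.choose (k + j) j

open Finset

section

variable {K : Type*} [Field K] [CharZero K]

theorem Nat.cast_choose_eq_choose_succ_mul_div (n k : ℕ) :
    (n.choose k : K) = (n + 1).choose k * (n + 1 - k) / (n + 1) := by
  rw [eq_div_iff (Nat.cast_add_one_ne_zero n)]
  rcases le_or_gt k (n + 1) with hk | hk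
  · rw [← Nat.cast_add_one, ← Nat.cast_sub hk]
    exact_mod_cast Nat.choose_mul_succ_eq n k
  · simp [Nat.choose_eq_zero_of_lt hk, Nat.choose_eq_zero_of_lt (n.lt_succ_self.trans hk)]

theorem Nat.cast_choose_eq_choose_succ_succ_mul_div (n k : ℕ) :
    (n.choose k : K) = (n + 1).choose (k + 1) * (k + 1) / (n + 1) := by
  rw [eq_div_iff (Nat.cast_add_one_ne_zero n), mul_comm]
  exact_mod_cast Nat.add_one_mul_choose_eq n k

end

def apheryTerm (n k : ℕ) : ℕ := n.choose k ^ 2 * (n + k).choose k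

-- Zeilberger's certificate for Apéry's recurrence.
def apheryCert (m : ℕ) : ℕ → ℚ
  | 0 => 0
  | k + 1 => apheryTerm (m + 1) k *
      (((k : ℚ) + 1) ^ 2 + (6 * m + 7) * (k + 1) - (11 * m ^ 2 + 37 * m + 30))

theorem apheryTerm_recurrence_eq_apheryCert_sub (m k : ℕ) :
    ((m : ℚ) + 2) ^ 2 * apheryTerm (m + 2) k
      - (11 * (m : ℚ) ^ 2 + 33 * m + 25) * apheryTerm (m + 1) k
      - ((m : ℚ) + 1) ^ 2 * apheryTerm m k
      = apheryCert m (k + 1) - apheryCert m k := by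
  rcases k with _ | j
  · simp only [apheryCert, apheryTerm, Nat.choose_zero_right]
    push_cast
    ring
  -- Expressing every binomial coefficient as a rational multiple of `A` or `B` reduces the claim
  -- to an identity of rational functions in `m` and `j`.
  set A : ℚ := ↑((m + 2).choose (j + 1))
  set B : ℚ := ↑((m + j + 3).choose (j + 1))
  have h₁ : ((m + 1).choose (j + 1) : ℚ) = A * (m + 1 - j) / (m + 2) := by
    rw [Nat.cast_choose_eq_choose_succ_mul_div]; push_cast; ring
  have h₀ : (m.choose (j + 1) : ℚ) = A * (m + 1 - j) / (m + 2) * (m - j) / (m + 1) := by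
    rw [Nat.cast_choose_eq_choose_succ_mul_div, h₁]; push_cast; ring
  have h₁' : ((m + 1).choose j : ℚ) = A * (j + 1) / (m + 2) := by
    rw [Nat.cast_choose_eq_choose_succ_succ_mul_div]; push_cast; ring
  have g₁ : ((m + 1 + (j + 1)).choose (j + 1) : ℚ) = B * (m + 2) / (m + j + 3) := by
    rw [Nat.cast_choose_eq_choose_succ_mul_div, show m + 1 + (j + 1) + 1 = m + j + 3 by ring]
    push_cast; ring
  have g₀ : ((m + (j + 1)).choose (j + 1) : ℚ)
      = B * (m + 2) / (m + j + 3) * (m + 1) / (m + j + 2) := by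
    rw [Nat.cast_choose_eq_choose_succ_mul_div, show m + (j + 1) + 1 = m + 1 + (j + 1) by ring,
      g₁]
    push_cast; ring
  have g₁' : ((m + 1 + j).choose j : ℚ)
      = B * (m + 2) / (m + j + 3) * (j + 1) / (m + j + 2) := by
    rw [Nat.cast_choose_eq_choose_succ_succ_mul_div, show m + 1 + j + 1 = m + 1 + (j + 1) by ring,
      g₁]
    push_cast; ring
  have g₂ : ((m + 2 + (j + 1)).choose (j + 1) : ℚ) = B := by
    rw [show m + 2 + (j + 1) = m + j + 3 by ring]
  simp only [apheryCert, apheryTerm]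
  push_cast
  rw [h₁, h₀, h₁', g₀, g₁, g₁', g₂]
  field_simp
  ring

theorem apheryBeta_eq_sum_range {n N : ℕ} (h : n < N) :
    apheryBeta n = ∑ k ∈ range N, apheryTerm n k :=
  sum_subset (range_subset_range.2 h) fun k _ hk ↦ by
    simp [Nat.choose_eq_zero_of_lt (not_lt.1 (mt mem_range.2 hk))]

theorem apheryBeta_recurrence (m : ℕ) :
    (m + 2) ^ 2 * apheryBeta (m + 2)
      = (11 * m ^ 2 + 33 * m + 25) * apheryBeta (m + 1) + (m + 1) ^ 2 * apheryBeta m := by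
  have htel := sum_range_sub (apheryCert m) (m + 3)
  simp only [← apheryTerm_recurrence_eq_apheryCert_sub, sum_sub_distrib, ← mul_sum] at htel
  have hend : apheryCert m (m + 3) = 0 := by
    simp [apheryCert, apheryTerm]
  rw [hend, apheryCert, sub_zero] at htel
  qify
  rw [apheryBeta_eq_sum_range (by omega : m + 2 < m + 3),
    apheryBeta_eq_sum_range (by omega : m + 1 < m + 3),
    apheryBeta_eq_sum_range (by omega : m < m + 3)]
  push_cast
  linear_combination htel

theorem sum_alternating_apheryBeta (m : ℕ) :
    ∑ k ∈ range (m + 1), (11 * (k : ℤ) ^ 2 + 9 * k + 2) * (-1) ^ (m - k) * apheryBeta k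
      = ((m : ℤ) + 1) ^ 2 * (apheryBeta (m + 1) - apheryBeta m) := by
  induction m with
  | zero => simp [apheryBeta, sum_range_succ]
  | succ m ih =>
    have hsign : ∀ k ∈ range (m + 1),
        (11 * (k : ℤ) ^ 2 + 9 * k + 2) * (-1) ^ (m + 1 - k) * apheryBeta k
          = -((11 * (k : ℤ) ^ 2 + 9 * k + 2) * (-1) ^ (m - k) * apheryBeta k) := fun k hk ↦ by
      rw [Nat.sub_add_comm (Nat.lt_succ_iff.1 (mem_range.1 hk)), pow_succ]
      ring
    have hrec : ((m : ℤ) + 2) ^ 2 * apheryBeta (m + 2)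
        = (11 * (m : ℤ) ^ 2 + 33 * m + 25) * apheryBeta (m + 1)
          + ((m : ℤ) + 1) ^ 2 * apheryBeta m := by
      exact_mod_cast apheryBeta_recurrence m
    rw [sum_range_succ, sum_congr rfl hsign, sum_neg_distrib, ih, Nat.sub_self]
    push_cast
    linear_combination -hrec

theorem choose_sq_mul_choose_mul_eq_apheryTerm_sub (m k : ℕ) :
    ((m + 1).choose (k + 1) : ℚ) ^ 2 * (m + 1 + k).choose k * (m + 1) * (3 * (m + 1) - k - 1)
      = ((m : ℚ) + 1) ^ 2 * (apheryTerm (m + 1) (k + 1) - apheryTerm m (k + 1)) := by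
  set A : ℚ := ↑((m + 1).choose (k + 1))
  set B : ℚ := ↑((m + k + 2).choose (k + 1))
  have h₀ : (m.choose (k + 1) : ℚ) = A * (m - k) / (m + 1) := by
    rw [Nat.cast_choose_eq_choose_succ_mul_div]; push_cast; ring
  have g₁ : ((m + 1 + (k + 1)).choose (k + 1) : ℚ) = B := by
    rw [show m + 1 + (k + 1) = m + k + 2 by ring]
  have g₀ : ((m + (k + 1)).choose (k + 1) : ℚ) = B * (m + 1) / (m + k + 2) := by
    rw [Nat.cast_choose_eq_choose_succ_mul_div, show m + (k + 1) + 1 = m + k + 2 by ring]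
    push_cast; ring
  have g₀' : ((m + 1 + k).choose k : ℚ) = B * (k + 1) / (m + k + 2) := by
    rw [Nat.cast_choose_eq_choose_succ_succ_mul_div, show m + 1 + k + 1 = m + k + 2 by ring]
    push_cast; ring
  simp only [apheryTerm]
  push_cast
  rw [h₀, g₀, g₁, g₀']
  field_simp
  ring

theorem sum_choose_sq_mul_choose_eq (m : ℕ) :
    ∑ k ∈ range (m + 1),
        ((m + 1).choose (k + 1) : ℤ) ^ 2 * (m + 1 + k).choose k * ((m : ℤ) + 1)
          * (3 * ((m : ℤ) + 1) - k - 1)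
      = ((m : ℤ) + 1) ^ 2 * (apheryBeta (m + 1) - apheryBeta m) := by
  have hβ₁ : (apheryBeta (m + 1) : ℤ)
      = ∑ k ∈ range (m + 1), (apheryTerm (m + 1) (k + 1) : ℤ) + 1 := by
    rw [apheryBeta_eq_sum_range (Nat.lt_succ_self _), sum_range_succ']
    simp [apheryTerm]
  have hβ₀ : (apheryBeta m : ℤ)
      = ∑ k ∈ range (m + 1), (apheryTerm m (k + 1) : ℤ) + 1 := by
    rw [apheryBeta_eq_sum_range (by omega : m < m + 2), sum_range_succ']
    simp [apheryTerm]
  rw [hβ₁, hβ₀, add_sub_add_right_eq_sub, ← sum_sub_distrib, mul_sum]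
  refine sum_congr rfl fun k _ ↦ Int.cast_injective (α := ℚ) ?_
  push_cast
  exact choose_sq_mul_choose_mul_eq_apheryTerm_sub m k

theorem stmt4_general (n : ℕ) :
    ∑ k ∈ Finset.range n,
        (11 * (k : ℤ) ^ 2 + 9 * k + 2) * (-1) ^ (n - 1 - k) * (apheryBeta k : ℤ) =
      ∑ k ∈ Finset.range n,
        ((n.choose (k + 1) : ℤ)) ^ 2 * ((n + k).choose k : ℤ) *
          (n : ℤ) * (3 * (n : ℤ) - k - 1) := by
  rcases n with _ | m
  · simp
  · push_cast
    rw [sum_alternating_apheryBeta, sum_choose_sq_mul_choose_eq]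

theorem stmt4 (n : ℕ) (hn : 0 < n) :
    ∑ k ∈ Finset.range n,
        (11 * (k : ℤ) ^ 2 + 9 * k + 2) * (-1) ^ (n - 1 - k) * (apheryBeta k : ℤ) =
      ∑ k ∈ Finset.range n,
        ((n.choose (k + 1) : ℤ)) ^ 2 * ((n + k).choose k : ℤ) *
          (n : ℤ) * (3 * (n : ℤ) - k - 1) :=
  stmt4_general n
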